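/- arXiv:math/0501051 — 5 statements merged into one kernel-verified Lean document; each statement's English description precedes it below -/
import Mathlib

section
/- Let G be a group whose center Z(G) is infinite cyclic, generated by an element z, and let t : G → ℤ be a group homomorphism. Then the endomorphism τ of G defined by τ(x) = x z^{t(x)} is an automorphism of G if and only if the restriction of τ to Z(G) is a surjection onto Z(G), and this holds if and only if t(z) = 0 or t(z) = −2 (equivalently, τ(z) = z or τ(z) = z^{−1}). -/
/-- Let `G` be a group whose center is infinite cyclic, generated by `z`,
and let `t : G → ℤ` be a group homomorphism.  The transvection endomorphism
`τ : x ↦ x * z ^ t x` is an automorphism (i.e. bijective) iff its restriction to the center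
is a surjection onto the center, iff `t z = 0` or `t z = -2` (equivalently, `τ z = z` or
`τ z = z⁻¹`). -/
theorem transvection_is_automorphism_iff
    {G : Type*} [Group G] (z : G)
    (hzgen : Subgroup.center G = Subgroup.zpowers z)
    (hord : ∀ k : ℤ, z ^ k = 1 → k = 0)
    (t : G → ℤ) (ht : ∀ x y : G, t (x * y) = t x + t y) :
    (Function.Bijective (fun x : G => x * z ^ t x) ↔
        ∀ w ∈ Subgroup.center G, ∃ x ∈ Subgroup.center G, x * z ^ t x = w) ∧
    (Function.Bijective (fun x : G => x * z ^ t x) ↔ (t z = 0 ∨ t z = -2)) ∧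
    ((t z = 0 ∨ t z = -2) ↔ (z * z ^ t z = z ∨ z * z ^ t z = z⁻¹)) := by
  have hzc : z ∈ Subgroup.center G := hzgen ▸ Subgroup.mem_zpowers z
  have ht1 : t 1 = 0 := by have h := ht 1 1; rw [one_mul] at h; omega
  have htinv : ∀ x : G, t x⁻¹ = - t x := by
    intro x
    have h := ht x x⁻¹
    rw [mul_inv_cancel, ht1] at h
    omega
  have htpow : ∀ (x : G) (n : ℕ), t (x ^ n) = n * t x := by
    intro x n
    induction n with
    | zero => simpa using ht1
    | succ n ih => rw [pow_succ, ht, ih]; push_cast; ring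
  have htzpow : ∀ (x : G) (k : ℤ), t (x ^ k) = k * t x := by
    intro x k
    cases k with
    | ofNat n => rw [Int.ofNat_eq_natCast, zpow_natCast, htpow]
    | negSucc n => rw [zpow_negSucc, htinv, htpow, Int.negSucc_eq]; push_cast; ring
  have hC_to_A : (t z = 0 ∨ t z = -2) → Function.Bijective (fun x : G => x * z ^ t x) := by
    intro hC
    have hc2 : (1 + t z) * (1 + t z) = 1 := by rcases hC with h | h <;> rw [h] <;> norm_num
    refine Function.bijective_iff_has_inverse.mpr
      ⟨fun x => x * z ^ (-(t x) * (1 + t z)), ?_, ?_⟩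
    · intro x
      show (x * z ^ t x) * z ^ (-(t (x * z ^ t x)) * (1 + t z)) = x
      rw [ht, htzpow, mul_assoc, ← zpow_add]
      have he : t x + -(t x + t x * t z) * (1 + t z) = 0 := by
        linear_combination (-(t x)) * hc2
      rw [he, zpow_zero, mul_one]
    · intro x
      show (x * z ^ (-(t x) * (1 + t z))) * z ^ t (x * z ^ (-(t x) * (1 + t z))) = x
      rw [ht, htzpow, mul_assoc, ← zpow_add]
      have he : -(t x) * (1 + t z) + (t x + -(t x) * (1 + t z) * t z) = 0 := by
        linear_combination (-(t x)) * hc2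
      rw [he, zpow_zero, mul_one]
  have hA_to_B : Function.Bijective (fun x : G => x * z ^ t x) →
      ∀ w ∈ Subgroup.center G, ∃ x ∈ Subgroup.center G, x * z ^ t x = w := by
    intro hbij w hw
    obtain ⟨x, hx⟩ := hbij.2 w
    simp only at hx
    refine ⟨x, ?_, hx⟩
    have hx' : x = w * (z ^ t x)⁻¹ := by rw [← hx]; group
    rw [hx']
    exact Subgroup.mul_mem _ hw (Subgroup.inv_mem _ (Subgroup.zpow_mem _ hzc _))
  have hB_to_C : (∀ w ∈ Subgroup.center G, ∃ x ∈ Subgroup.center G, x * z ^ t x = w) →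
      (t z = 0 ∨ t z = -2) := by
    intro hB
    obtain ⟨x, hxc, hx⟩ := hB z hzc
    obtain ⟨k, hk⟩ := (Subgroup.mem_zpowers_iff.mp (hzgen ▸ hxc))
    subst hk
    rw [htzpow] at hx
    have h2 : z ^ (k + k * t z - 1) = 1 := by
      have h3 : z ^ (k + k * t z) = z := by rw [zpow_add]; exact hx
      rw [zpow_sub, h3, zpow_one, mul_inv_cancel]
    have h3 := hord _ h2
    have h4 : k * (1 + t z) = 1 := by linear_combination h3
    rcases Int.eq_one_or_neg_one_of_mul_eq_one' h4 with ⟨_, h⟩ | ⟨_, h⟩ <;> omega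
  have hthird : (t z = 0 ∨ t z = -2) ↔ (z * z ^ t z = z ∨ z * z ^ t z = z⁻¹) := by
    constructor
    · rintro (h | h) <;> rw [h]
      · left; simp
      · right; group
    · rintro (h | h)
      · left
        have h1 : z ^ t z = 1 := mul_left_cancel (by rw [h, mul_one])
        exact hord _ h1
      · right
        have hz' : z ^ t z = z⁻¹ * z⁻¹ :=
          mul_left_cancel (show z * z ^ t z = z * (z⁻¹ * z⁻¹) by rw [h]; group)
        have h2 : z ^ (t z + 2) = 1 := by rw [zpow_add, hz']; group
        have := hord _ h2
        omega
  exact ⟨⟨hA_to_B, fun hB => hC_to_A (hB_to_C hB)⟩,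
    ⟨fun hA => hB_to_C (hA_to_B hA), hC_to_A⟩, hthird⟩
end

section
/- Let ρ : Γ → Γ' be an injective homomorphism of groups, and suppose that rk(Γ) = rk(Γ') = n < ∞. Let G be a free abelian subgroup of Γ of rank n, and let g ∈ G. Then rk(Z(C_{Γ'}(ρ(g)))) ≤ rk(Z(C_Γ(g))); that is, for every natural number k, if the center of the centralizer of ρ(g) in Γ' contains a free abelian subgroup of rank k, then the center of the centralizer of g in Γ contains a free abelian subgroup of rank k. -/
/-- A group `H` contains a free abelian subgroup of rank `k` iff there is an injective
homomorphism from `ℤ^k` into `H`. -/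
def HasFreeAbelianSubgroupOfRank (H : Type*) [Group H] (k : ℕ) : Prop :=
  ∃ f : Multiplicative (Fin k → ℤ) →* H, Function.Injective f

/-- `rk(H) = n` : `H` contains a free abelian subgroup of rank `n` but none of rank `n+1`. -/
def RankEq (H : Type*) [Group H] (n : ℕ) : Prop :=
  HasFreeAbelianSubgroupOfRank H n ∧ ¬ HasFreeAbelianSubgroupOfRank H (n + 1)

/-!
As `G ≅ ℤⁿ` is abelian and contains `g`, its image `ρ(G)` lies in `C_{Γ'}(ρ g)`, so every `x` in
`Z(C_{Γ'}(ρ g))` commutes with the copy `ρ(G)` of `ℤⁿ`. Since `Γ'` contains no `ℤⁿ⁺¹`, some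
nonzero power `x ^ m` lies in `ρ(G)`, say `x ^ m = ρ y`. Then `y` is central in `C_Γ(g)`: for
`z ∈ C_Γ(g)` we have `ρ z ∈ C_{Γ'}(ρ g)`, so `ρ z` commutes with `x ^ m = ρ y`, and `ρ` is injective.
Applied to a basis `xᵢ` of a free abelian subgroup of `Z(C_{Γ'}(ρ g))`, the powers `xᵢ ^ mᵢ`
form a basis of a free abelian group of the same rank inside `ρ(Z(C_Γ(g)))`.
-/

open Multiplicative

section PiInt

variable {ι : Type*} [DecidableEq ι]

theorem ofAdd_single_eq_zpow (i : ι) (c : ℤ) :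
    (ofAdd (Pi.single i c) : Multiplicative (ι → ℤ)) = ofAdd (Pi.single i 1) ^ c := by
  rw [← ofAdd_zsmul, ← Pi.single_smul, smul_eq_mul, mul_one]

theorem ofAdd_eq_prod_zpow_single [Fintype ι] (c : ι → ℤ) :
    ofAdd c = ∏ i, ofAdd (Pi.single i (1 : ℤ)) ^ c i := by
  simp_rw [← ofAdd_single_eq_zpow, ← ofAdd_sum, Finset.univ_sum_single]

end PiInt

namespace HasFreeAbelianSubgroupOfRank

variable {H H' : Type*} [Group H] [Group H'] {k n : ℕ}

theorem of_injective (φ : H →* H') (hφ : Function.Injective φ)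
    (h : HasFreeAbelianSubgroupOfRank H k) : HasFreeAbelianSubgroupOfRank H' k :=
  let ⟨f, hf⟩ := h
  ⟨φ.comp f, hφ.comp hf⟩

theorem succ_of_prod (f : Multiplicative ℤ × Multiplicative (Fin n → ℤ) →* H)
    (hf : Function.Injective f) : HasFreeAbelianSubgroupOfRank H (n + 1) :=
  let ψ : Multiplicative (Fin (n + 1) → ℤ) ≃* Multiplicative ℤ × Multiplicative (Fin n → ℤ) :=
    (AddEquiv.toMultiplicative (Fin.consLinearEquiv ℤ fun _ => ℤ).symm.toAddEquiv).trans
      (MulEquiv.prodMultiplicative ℤ (Fin n → ℤ))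
  ⟨f.comp ψ.toMonoidHom, hf.comp ψ.injective⟩

theorem succ_of_commute {j : Multiplicative (Fin n → ℤ) →* H} (hj : Function.Injective j)
    {x : H} (hx : ∀ b, Commute x (j b)) (hpow : ∀ m : ℤ, m ≠ 0 → x ^ m ∉ j.range) :
    HasFreeAbelianSubgroupOfRank H (n + 1) := by
  refine succ_of_prod ((zpowersHom H x).noncommCoprod j fun a b => by
    rw [zpowersHom_apply]; exact (hx b).zpow_left _) ?_
  rw [injective_iff_map_eq_one]
  rintro ⟨a, b⟩ hab
  rw [MonoidHom.noncommCoprod_apply, Prod.fst, Prod.snd, zpowersHom_apply,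
    mul_eq_one_iff_eq_inv, ← map_inv] at hab
  have ha : toAdd a = 0 := by
    by_contra ha
    exact hpow _ ha ⟨_, hab.symm⟩
  rw [ha, zpow_zero, eq_comm, map_inv, inv_eq_one, ← map_one j] at hab
  exact Prod.ext (toAdd.injective ha) (hj hab)

theorem of_zpow_mem {f : Multiplicative (Fin k → ℤ) →* H} (hf : Function.Injective f)
    (K : Subgroup H) {m : Fin k → ℤ} (hm : ∀ i, m i ≠ 0)
    (hK : ∀ i, f (ofAdd (Pi.single i 1)) ^ m i ∈ K) : HasFreeAbelianSubgroupOfRank K k := by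
  let ψ := AddMonoidHom.toMultiplicative (AddMonoidHom.mulLeft m)
  have hψ : Function.Injective ψ := fun a b hab =>
    toAdd.injective <| funext fun i => mul_left_cancel₀ (hm i) (congrFun (congrArg toAdd hab) i)
  have hrange : ∀ a, f (ψ a) ∈ K := by
    intro a
    change a ∈ K.comap (f.comp ψ)
    rw [← ofAdd_toAdd a, ofAdd_eq_prod_zpow_single]
    refine Subgroup.prod_mem _ fun i _ => Subgroup.zpow_mem _ ?_ _
    have hψi : ψ (ofAdd (Pi.single i 1)) = ofAdd (Pi.single i 1) ^ m i := by
      rw [← ofAdd_single_eq_zpow]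
      change ofAdd (m * Pi.single i 1) = _
      rw [← Pi.single_mul_right, mul_one]
    simpa [hψi] using hK i
  exact ⟨(f.comp ψ).codRestrict K hrange, fun a b hab => hψ (hf (congrArg Subtype.val hab))⟩

end HasFreeAbelianSubgroupOfRank

theorem zpow_mem_map_center_of_commute {Γ Γ' : Type*} [Group Γ] [Group Γ'] {ρ : Γ →* Γ'}
    (hρ : Function.Injective ρ) {C : Subgroup Γ} {x : Γ'} (hx : ∀ z ∈ C, Commute x (ρ z))
    {y : Γ} (hy : y ∈ C) {m : ℤ} (hxy : x ^ m = ρ y) :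
    x ^ m ∈ (Subgroup.center C).map (ρ.comp C.subtype) := by
  refine ⟨⟨y, hy⟩, Subgroup.mem_center_iff.2 fun z => Subtype.ext (hρ ?_), hxy.symm⟩
  simp only [Subgroup.coe_mul, map_mul, ← hxy]
  exact ((hx z z.2).zpow_left m).eq.symm

theorem rank_center_centralizer_le_general
    {Γ Γ' : Type*} [Group Γ] [Group Γ'] (ρ : Γ →* Γ') (hρ : Function.Injective ρ)
    (n : ℕ) (hΓ' : RankEq Γ' n)
    (G : Subgroup Γ) (e : Multiplicative (Fin n → ℤ) ≃* G)
    (g : Γ) (hg : g ∈ G) (k : ℕ)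
    (hk : HasFreeAbelianSubgroupOfRank
      (Subgroup.center (Subgroup.centralizer {ρ g} : Subgroup Γ')) k) :
    HasFreeAbelianSubgroupOfRank
      (Subgroup.center (Subgroup.centralizer {g} : Subgroup Γ)) k := by
  set C := Subgroup.centralizer {g}
  set C' := Subgroup.centralizer {ρ g}
  obtain ⟨f, hf⟩ := hk
  let f' := C'.subtype.comp ((Subgroup.center C').subtype.comp f)
  have hf' : Function.Injective f' := Subtype.val_injective.comp (Subtype.val_injective.comp hf)
  have hGC : G ≤ C := fun u hu => Subgroup.mem_centralizer_singleton_iff.2 <| by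
    simpa using congrArg (fun v => (e v : Γ)) (mul_comm (e.symm ⟨u, hu⟩) (e.symm ⟨g, hg⟩))
  have hCC' : C.map ρ ≤ C' := by
    simpa only [Set.image_singleton] using Subgroup.map_centralizer_le_centralizer_image {g} ρ
  have hcomm : ∀ a, ∀ z ∈ C, Commute (f' a) (ρ z) := fun a z hz =>
    Commute.symm <| congrArg Subtype.val <|
      Subgroup.mem_center_iff.1 (f a).2 ⟨ρ z, hCC' ⟨z, hz, rfl⟩⟩
  let j := ρ.comp (G.subtype.comp e.toMonoidHom)
  have hj : Function.Injective j := hρ.comp (G.subtype_injective.comp e.injective)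
  have hpow : ∀ i, ∃ m : ℤ, m ≠ 0 ∧
      f' (ofAdd (Pi.single i 1)) ^ m ∈ (Subgroup.center C).map (ρ.comp C.subtype) := by
    intro i
    have hx := hcomm (ofAdd (Pi.single i 1))
    by_contra! h
    refine hΓ'.2 (.succ_of_commute hj (fun b => hx _ (hGC (e b).2)) fun m hm hmem => ?_)
    obtain ⟨b, hb⟩ := hmem
    exact h m hm (zpow_mem_map_center_of_commute hρ hx (hGC (e b).2) hb.symm)
  choose m hm hmC using hpow
  have hρC : Function.Injective (ρ.comp C.subtype) := hρ.comp C.subtype_injective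
  exact (HasFreeAbelianSubgroupOfRank.of_zpow_mem hf' _ hm hmC).of_injective
    (Subgroup.equivMapOfInjective _ _ hρC).symm.toMonoidHom (MulEquiv.injective _)

/-- Ivanov–McCarthy.  Let `ρ : Γ → Γ'` be an injective homomorphism of
groups with `rk Γ = rk Γ' = n < ∞`.  If `G` is a free abelian subgroup of `Γ` of maximal
rank `n` and `g ∈ G`, then `rk Z(C_{Γ'}(ρ g)) ≤ rk Z(C_Γ(g))`:  for every `k`, if the
center of the centralizer of `ρ g` in `Γ'` contains a free abelian subgroup of rank `k`,
then so does the center of the centralizer of `g` in `Γ`. -/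
theorem rank_center_centralizer_le
    {Γ Γ' : Type*} [Group Γ] [Group Γ'] (ρ : Γ →* Γ') (hρ : Function.Injective ρ)
    (n : ℕ) (hΓ : RankEq Γ n) (hΓ' : RankEq Γ' n)
    (G : Subgroup Γ) (e : Multiplicative (Fin n → ℤ) ≃* G)
    (g : Γ) (hg : g ∈ G) (k : ℕ)
    (hk : HasFreeAbelianSubgroupOfRank
      (Subgroup.center (Subgroup.centralizer {ρ g} : Subgroup Γ')) k) :
    HasFreeAbelianSubgroupOfRank
      (Subgroup.center (Subgroup.centralizer {g} : Subgroup Γ)) k :=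
  rank_center_centralizer_le_general ρ hρ n hΓ' G e g hg k hk
end

section
/- Let φ and ψ be injective simplicial maps of the Farey graph to itself. If there exist three pairwise adjacent vertices u, v, w of the Farey graph such that φ(u) = ψ(u), φ(v) = ψ(v), and φ(w) = ψ(w), then φ = ψ. -/
/-- Coprime pairs of integers, the "homogeneous coordinates" of Farey vertices. -/
def CoprimePair : Type := {p : ℤ × ℤ // IsCoprime p.1 p.2}

/-- Two coprime pairs are identified when they agree up to an overall sign. -/
def fareySetoid : Setoid CoprimePair where
  r a b := a.val = b.val ∨ a.val = -b.val
  iseqv := by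
    constructor
    · intro a; exact Or.inl rfl
    · rintro a b (h | h)
      · exact Or.inl h.symm
      · right; rw [h, neg_neg]
    · rintro a b c (h | h) (h' | h')
      · exact Or.inl (h.trans h')
      · exact Or.inr (h.trans h')
      · right; rw [h, h']
      · left; rw [h, h', neg_neg]

/-- The vertex set of the Farey graph: coprime pairs of integers up to sign. -/
def Farey : Type := Quotient fareySetoid

/-- The class of a coprime pair in the Farey graph. -/
def Farey.mk (p : CoprimePair) : Farey := Quotient.mk fareySetoid p

/-- Adjacency in the Farey graph: `[(p,q)]` and `[(r,s)]` are adjacent iff `|ps - qr| = 1`. -/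
def Farey.Adj (x y : Farey) : Prop :=
  ∃ p q : CoprimePair, x = Farey.mk p ∧ y = Farey.mk q ∧
    |p.val.1 * q.val.2 - p.val.2 * q.val.1| = 1

/-!
Identify the rows `P, Q` of a matrix `g ∈ SL(2, ℤ)` with the vertices `[P], [Q]`; these form an
edge, and by Cramer's rule its only common neighbours are `[P + Q]` and `[P - Q]`. So if two
injective simplicial maps agree on the triangle `[P], [Q], [P - Q]`, the images of `[P + Q]` are
both common neighbours of the same edge and both differ from the image of `[P - Q]`, hence they
coincide. In terms of matrices, agreement on the triangle of `g` propagates to the triangles of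
`T * g` and `S * g`; as `S` and `T` generate `SL(2, ℤ)`, and every vertex is the class of the top
row of some matrix, it propagates to all vertices.
-/

open Matrix MatrixGroups ModularGroup

theorem Matrix.SpecialLinearGroup.det_fin_two_eq_one {R : Type*} [CommRing R] (g : SL(2, R)) :
    g 0 0 * g 1 1 - g 0 1 * g 1 0 = 1 := by
  rw [← det_fin_two, g.det_coe]

namespace ModularGroup

theorem S_mul_apply_zero (g : SL(2, ℤ)) : (S * g) 0 = -g 1 := by
  ext j; simp [Matrix.mul_apply, Fin.sum_univ_two]

theorem S_mul_apply_one (g : SL(2, ℤ)) : (S * g) 1 = g 0 := by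
  ext j; simp [Matrix.mul_apply, Fin.sum_univ_two]

theorem T_mul_apply_zero (g : SL(2, ℤ)) : (T * g) 0 = g 0 + g 1 := by
  ext j; simp [Matrix.mul_apply, Fin.sum_univ_two]

theorem T_inv_mul_apply_zero (g : SL(2, ℤ)) : (T⁻¹ * g) 0 = g 0 - g 1 := by
  ext j; simp [Matrix.mul_apply, Fin.sum_univ_two, sub_eq_add_neg]

end ModularGroup

namespace Farey

theorem mk_surjective : Function.Surjective mk := Quotient.mk_surjective

theorem mk_eq_mk_iff {p q : CoprimePair} : mk p = mk q ↔ p.val = q.val ∨ p.val = -q.val :=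
  Quotient.eq

theorem adj_mk_iff {p q : CoprimePair} :
    Adj (mk p) (mk q) ↔ |p.val.1 * q.val.2 - p.val.2 * q.val.1| = 1 := by
  refine ⟨?_, fun h => ⟨p, q, rfl, rfl, h⟩⟩
  rintro ⟨p', q', hp, hq, h⟩
  rcases mk_eq_mk_iff.1 hp with hp | hp <;> rcases mk_eq_mk_iff.1 hq with hq | hq <;>
    rw [← h, hp, hq] <;> simp only [Prod.fst_neg, Prod.snd_neg] <;>
    exact abs_eq_abs.2 (by first | (left; ring1) | (right; ring1))

def ofRow (g : SL(2, ℤ)) (i : Fin 2) : Farey := mk ⟨(g i 0, g i 1), g.isCoprime_row i⟩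

theorem ofRow_zero_surjective : Function.Surjective (ofRow · 0) := by
  intro x
  obtain ⟨⟨⟨a, b⟩, hab⟩, rfl⟩ := mk_surjective x
  obtain ⟨g, ha, hb⟩ := hab.exists_SL2_row 0
  exact ⟨g, congrArg mk (Subtype.ext (Prod.ext ha hb))⟩

theorem ofRow_eq_ofRow_iff {g h : SL(2, ℤ)} {i j : Fin 2} :
    ofRow g i = ofRow h j ↔ g i = h j ∨ g i = -h j :=
  mk_eq_mk_iff.trans (by simp [Prod.ext_iff, funext_iff, Fin.forall_fin_two])

theorem ofRow_neg (g : SL(2, ℤ)) (i : Fin 2) : ofRow (-g) i = ofRow g i :=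
  ofRow_eq_ofRow_iff.2 (.inr rfl)

theorem ofRow_T_mul_ne_ofRow_T_inv_mul (g : SL(2, ℤ)) :
    ofRow (T * g) 0 ≠ ofRow (T⁻¹ * g) 0 := by
  have hdet := g.det_fin_two_eq_one
  rw [Ne, ofRow_eq_ofRow_iff, T_mul_apply_zero, T_inv_mul_apply_zero]
  simp only [funext_iff, Fin.forall_fin_two, Pi.add_apply, Pi.sub_apply, Pi.neg_apply]
  grind

theorem adj_iff_exists_ofRow {a b : Farey} :
    Adj a b ↔ ∃ g : SL(2, ℤ), ofRow g 0 = a ∧ ofRow g 1 = b := by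
  constructor
  · rintro ⟨p, q, rfl, rfl, h⟩
    rcases (abs_eq zero_le_one).1 h with h | h
    · exact ⟨⟨!![p.1.1, p.1.2; q.1.1, q.1.2], by simpa [det_fin_two_of] using h⟩, rfl, rfl⟩
    · refine ⟨⟨!![p.1.1, p.1.2; -q.1.1, -q.1.2], by simp [det_fin_two_of]; linarith⟩, rfl, ?_⟩
      exact mk_eq_mk_iff.2 (.inr (by simp [Prod.ext_iff]))
  · rintro ⟨g, rfl, rfl⟩
    exact adj_mk_iff.2 (by simp [g.det_fin_two_eq_one])

theorem adj_ofRow_zero_and_adj_ofRow_one_iff {g : SL(2, ℤ)} {c : Farey} :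
    Adj (ofRow g 0) c ∧ Adj (ofRow g 1) c ↔ c = ofRow (T * g) 0 ∨ c = ofRow (T⁻¹ * g) 0 := by
  obtain ⟨r, rfl⟩ := mk_surjective c
  have hdet := g.det_fin_two_eq_one
  have hadj (i : Fin 2) : Adj (ofRow g i) (mk r) ↔ |g i 0 * r.val.2 - g i 1 * r.val.1| = 1 :=
    adj_mk_iff
  have heq (h : SL(2, ℤ)) : mk r = ofRow h 0 ↔ r.val = (h 0 0, h 0 1) ∨ r.val = -(h 0 0, h 0 1) :=
    mk_eq_mk_iff
  have hT j : (T * g) 0 j = g 0 j + g 1 j := congrFun (T_mul_apply_zero g) j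
  have hT' j : (T⁻¹ * g) 0 j = g 0 j - g 1 j := congrFun (T_inv_mul_apply_zero g) j
  simp only [hadj, heq, hT, hT', Prod.ext_iff, Prod.fst_neg, Prod.snd_neg]
  generalize r.val.1 = x, r.val.2 = y
  constructor
  · rintro ⟨h0, h1⟩
    -- Cramer's rule: `(x, y)` is the combination of the rows of `g` with the two minors as weights.
    have hx : x = -(g 1 0 * y - g 1 1 * x) * g 0 0 + (g 0 0 * y - g 0 1 * x) * g 1 0 := by
      linear_combination (-x) * hdet
    have hy : y = -(g 1 0 * y - g 1 1 * x) * g 0 1 + (g 0 0 * y - g 0 1 * x) * g 1 1 := by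
      linear_combination (-y) * hdet
    rcases (abs_eq zero_le_one).1 h0 with h0 | h0 <;>
      rcases (abs_eq zero_le_one).1 h1 with h1 | h1 <;>
      rw [h0, h1] at hx hy <;> omega
  · rintro ((⟨rfl, rfl⟩ | ⟨rfl, rfl⟩) | (⟨rfl, rfl⟩ | ⟨rfl, rfl⟩)) <;> constructor <;>
      rw [abs_eq zero_le_one] <;>
      first
        | (left; linear_combination hdet)
        | (left; linear_combination -hdet)
        | (right; linear_combination hdet)
        | (right; linear_combination -hdet)

theorem eq_or_eq_or_eq_of_adj {a b c₁ c₂ c₃ : Farey} (hab : Adj a b)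
    (h₁ : Adj a c₁ ∧ Adj b c₁) (h₂ : Adj a c₂ ∧ Adj b c₂) (h₃ : Adj a c₃ ∧ Adj b c₃) :
    c₁ = c₂ ∨ c₁ = c₃ ∨ c₂ = c₃ := by
  obtain ⟨g, rfl, rfl⟩ := adj_iff_exists_ofRow.1 hab
  rw [adj_ofRow_zero_and_adj_ofRow_one_iff] at h₁ h₂ h₃
  rcases h₁ with rfl | rfl <;> rcases h₂ with rfl | rfl <;> rcases h₃ with rfl | rfl <;> simp

/-- The triangle `[P], [Q], [P - Q]` spanned by the rows `P, Q` of `g`. -/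
def triangle (g : SL(2, ℤ)) : Set Farey := {ofRow g 0, ofRow g 1, ofRow (T⁻¹ * g) 0}

theorem triangle_T_mul (g : SL(2, ℤ)) :
    triangle (T * g) = {ofRow (T * g) 0, ofRow g 1, ofRow g 0} := by
  rw [triangle, inv_mul_cancel_left, ofRow_eq_ofRow_iff.2 (.inl (T_mul_apply_one g))]

theorem triangle_S_mul (g : SL(2, ℤ)) : triangle (S * g) = triangle (T * g) := by
  have h₀ : ofRow (S * g) 0 = ofRow g 1 := ofRow_eq_ofRow_iff.2 (.inr (S_mul_apply_zero g))
  have h₁ : ofRow (S * g) 1 = ofRow g 0 := ofRow_eq_ofRow_iff.2 (.inl (S_mul_apply_one g))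
  have h₂ : ofRow (T⁻¹ * (S * g)) 0 = ofRow (T * g) 0 := ofRow_eq_ofRow_iff.2 <| .inr <| by
    rw [T_inv_mul_apply_zero, S_mul_apply_zero, S_mul_apply_one, T_mul_apply_zero]; abel
  rw [triangle, triangle_T_mul, h₀, h₁, h₂]
  ext; simp only [Set.mem_insert_iff, Set.mem_singleton_iff]; tauto

theorem triangle_neg (g : SL(2, ℤ)) : triangle (-g) = triangle g := by
  rw [triangle, triangle, mul_neg, ofRow_neg, ofRow_neg, ofRow_neg]

theorem exists_triangle_eq {u v w : Farey} (huv : Adj u v) (hvw : Adj v w) (huw : Adj u w) :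
    ∃ g : SL(2, ℤ), triangle g = {u, v, w} := by
  obtain ⟨g, rfl, rfl⟩ := adj_iff_exists_ofRow.1 huv
  rcases adj_ofRow_zero_and_adj_ofRow_one_iff.1 ⟨huw, hvw⟩ with rfl | rfl
  · refine ⟨T * g, ?_⟩
    rw [triangle_T_mul]
    ext; simp only [Set.mem_insert_iff, Set.mem_singleton_iff]; tauto
  · exact ⟨g, rfl⟩

structure IsInjectiveSimplicial (φ : Farey → Farey) : Prop where
  injective : Function.Injective φ
  map_adj : ∀ x y, Adj x y → Adj (φ x) (φ y)

section

variable {φ ψ : Farey → Farey}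

theorem apply_eq_of_agree_on_triangle (hφ : IsInjectiveSimplicial φ)
    (hψ : IsInjectiveSimplicial ψ) {x y z z' : Farey} (hxy : Adj x y)
    (hz : Adj x z ∧ Adj y z) (hz' : Adj x z' ∧ Adj y z') (hzz' : z ≠ z')
    (hx : φ x = ψ x) (hy : φ y = ψ y) (hzφψ : φ z = ψ z) : φ z' = ψ z' := by
  have hφz : Adj (φ x) (φ z) ∧ Adj (φ y) (φ z) := ⟨hφ.map_adj _ _ hz.1, hφ.map_adj _ _ hz.2⟩
  have hφz' : Adj (φ x) (φ z') ∧ Adj (φ y) (φ z') :=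
    ⟨hφ.map_adj _ _ hz'.1, hφ.map_adj _ _ hz'.2⟩
  have hψz' : Adj (φ x) (ψ z') ∧ Adj (φ y) (ψ z') := by
    rw [hx, hy]; exact ⟨hψ.map_adj _ _ hz'.1, hψ.map_adj _ _ hz'.2⟩
  rcases eq_or_eq_or_eq_of_adj (hφ.map_adj _ _ hxy) hφz' hψz' hφz with h | h | h
  · exact h
  · exact absurd (hφ.injective h) hzz'.symm
  · exact absurd (hψ.injective (h.trans hzφψ)) hzz'.symm

theorem eqOn_triangle_T_mul (hφ : IsInjectiveSimplicial φ) (hψ : IsInjectiveSimplicial ψ)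
    {g : SL(2, ℤ)} (h : Set.EqOn φ ψ (triangle g)) : Set.EqOn φ ψ (triangle (T * g)) := by
  have h₀ : φ (ofRow g 0) = ψ (ofRow g 0) := h (by simp [triangle])
  have h₁ : φ (ofRow g 1) = ψ (ofRow g 1) := h (by simp [triangle])
  have hflip : φ (ofRow (T * g) 0) = ψ (ofRow (T * g) 0) :=
    apply_eq_of_agree_on_triangle hφ hψ (adj_iff_exists_ofRow.2 ⟨g, rfl, rfl⟩)
      (adj_ofRow_zero_and_adj_ofRow_one_iff.2 (.inr rfl))
      (adj_ofRow_zero_and_adj_ofRow_one_iff.2 (.inl rfl))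
      (ofRow_T_mul_ne_ofRow_T_inv_mul g).symm h₀ h₁ (h (by simp [triangle]))
  rw [triangle_T_mul]
  rintro _ (rfl | rfl | rfl)
  exacts [hflip, h₁, h₀]

theorem eqOn_triangle_mul (hφ : IsInjectiveSimplicial φ) (hψ : IsInjectiveSimplicial ψ)
    {g : SL(2, ℤ)} (h : Set.EqOn φ ψ (triangle g)) (k : SL(2, ℤ)) :
    Set.EqOn φ ψ (triangle (k * g)) := by
  have hT (y : SL(2, ℤ)) (hy : Set.EqOn φ ψ (triangle y)) : Set.EqOn φ ψ (triangle (T * y)) :=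
    eqOn_triangle_T_mul hφ hψ hy
  have hS (y : SL(2, ℤ)) (hy : Set.EqOn φ ψ (triangle y)) : Set.EqOn φ ψ (triangle (S * y)) :=
    triangle_S_mul y ▸ hT y hy
  have hk : k ∈ Subgroup.closure {S, T} := SpecialLinearGroup.SL2Z_generators ▸ Subgroup.mem_top k
  induction hk using Subgroup.closure_induction_left with
  | one => rwa [one_mul]
  | mul_left x hx y _ ih =>
    rcases hx with rfl | rfl
    · rw [mul_assoc]; exact hS _ ih
    · rw [mul_assoc]; exact hT _ ih
  | inv_mul_cancel x hx y _ ih =>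
    rcases hx with rfl | rfl
    · rw [S_inv, neg_mul, neg_mul, triangle_neg, mul_assoc]; exact hS _ ih
    · -- `T_S_rel` writes `T⁻¹` as the word `S S S T S T S`.
      rw [← T_S_rel]
      simp only [smul_eq_mul, mul_assoc]
      exact hS _ (hS _ (hS _ (hT _ (hS _ (hT _ (hS _ ih))))))

end

end Farey

/-- Two injective simplicial maps of the Farey graph which agree on the three
vertices of a triangle are equal. -/
theorem farey_injective_simplicial_maps_eq_of_agree_on_triangle
    (φ ψ : Farey → Farey)
    (hφinj : Function.Injective φ) (hψinj : Function.Injective ψ)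
    (hφadj : ∀ x y : Farey, Farey.Adj x y → Farey.Adj (φ x) (φ y))
    (hψadj : ∀ x y : Farey, Farey.Adj x y → Farey.Adj (ψ x) (ψ y))
    (u v w : Farey) (huv : Farey.Adj u v) (hvw : Farey.Adj v w) (huw : Farey.Adj u w)
    (hu : φ u = ψ u) (hv : φ v = ψ v) (hw : φ w = ψ w) :
    φ = ψ := by
  obtain ⟨g, hg⟩ := Farey.exists_triangle_eq huv hvw huw
  have hφψ : Set.EqOn φ ψ (Farey.triangle g) := by
    rw [hg]; rintro _ (rfl | rfl | rfl) <;> assumption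
  funext x
  obtain ⟨k, rfl⟩ := Farey.ofRow_zero_surjective x
  refine Farey.eqOn_triangle_mul ⟨hφinj, hφadj⟩ ⟨hψinj, hψadj⟩ hφψ (k * g⁻¹) ?_
  rw [inv_mul_cancel_right]
  exact Set.mem_insert _ _
end

section
/- Let n ≥ 3 and let t be an integer. There is a unique group endomorphism ρ of the braid group B_{n+1} satisfying ρ(σ_i) = σ_i z^t for all 1 ≤ i ≤ n. This endomorphism is injective for every t, and it is surjective if and only if t = 0. -/
/-- The braid relations on `n` generators `σ_1, …, σ_n` (indexed by `Fin n`):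
`σ_i σ_j σ_i = σ_j σ_i σ_j` when `j = i + 1`, and `σ_i σ_j = σ_j σ_i` when `j ≥ i + 2`.
The resulting presented group is the braid group `B_{n+1}` on `n+1` strands. -/
def braidRels (n : ℕ) : Set (FreeGroup (Fin n)) :=
  {r | (∃ i j : Fin n, (i : ℕ) + 1 = (j : ℕ) ∧
          r = .of i * .of j * .of i * (.of j * .of i * .of j)⁻¹) ∨
       (∃ i j : Fin n, (i : ℕ) + 2 ≤ (j : ℕ) ∧
          r = .of i * .of j * (.of j * .of i)⁻¹)}

/-- The braid group `B_{n+1}` on `n+1` strands, presented with `n` generators. -/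
abbrev BraidGroup (n : ℕ) : Type := PresentedGroup (braidRels n)

/-- The standard generator `σ_{i+1}` of the braid group. -/
def braidGen {n : ℕ} (i : Fin n) : BraidGroup n := PresentedGroup.of i

/-- The full twist `z = (σ_1 σ_2 ⋯ σ_n)^{n+1}`, which generates the center of `B_{n+1}`. -/
def fullTwist (n : ℕ) : BraidGroup n :=
  ((List.ofFn fun i : Fin n => braidGen i).prod) ^ (n + 1)

/-!
Conjugation by `δ = σ₁ ⋯ σₙ` shifts `σᵢ` to `σᵢ₊₁` for `i < n`, and `δ²` carries `σₙ` to `σ₁`;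
hence `z = δⁿ⁺¹` is central. For any homomorphism `e : G → ℤ` and central `z`, the map
`x ↦ x z^{t e(x)}` is then an endomorphism, and with `e` the exponent sum it sends `σᵢ` to
`σᵢ zᵗ`; uniqueness holds because the `σᵢ` generate. As `e(z) = n(n+1) =: N`, we get
`e(ρ x) = (1 + tN) e(x)`: so `ρ x = 1` forces `e(x) = 0` and then `x = 1`, while `σ₁` lying in
the image forces `1 + tN = ±1`, i.e. `t = 0` once `N > 2`.
-/

section Transvection

variable {G : Type*} [Group G] (e : G →* Multiplicative ℤ) {z : G}

def transvection (hz : z ∈ Subgroup.center G) (t : ℤ) : G →* G where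
  toFun x := x * z ^ (t * (e x).toAdd)
  map_one' := by simp
  map_mul' x y := by
    have hcomm : y * z ^ (t * (e x).toAdd) = z ^ (t * (e x).toAdd) * y :=
      Subgroup.mem_center_iff.mp (Subgroup.zpow_mem _ hz _) y
    rw [map_mul, toAdd_mul, mul_add, zpow_add, mul_assoc x, ← mul_assoc y, hcomm]
    group

variable (hz : z ∈ Subgroup.center G) (t : ℤ)

theorem transvection_apply (x : G) : transvection e hz t x = x * z ^ (t * (e x).toAdd) := rfl

theorem transvection_zero : transvection e hz 0 = MonoidHom.id G := by
  ext x
  simp [transvection_apply]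

theorem toAdd_transvection (x : G) :
    (e (transvection e hz t x)).toAdd = (e x).toAdd * (1 + t * (e z).toAdd) := by
  rw [transvection_apply, map_mul, map_zpow, toAdd_mul, toAdd_zpow, smul_eq_mul]
  ring

theorem transvection_injective (hez : 1 < (e z).toAdd) :
    Function.Injective (transvection e hz t) := by
  have h : 1 + t * (e z).toAdd ≠ 0 := fun h => by
    have := Int.le_of_dvd one_pos (⟨-t, by linarith⟩ : (e z).toAdd ∣ 1)
    omega
  refine (injective_iff_map_eq_one _).mpr fun x hx => ?_
  have hex : (e x).toAdd = 0 := by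
    have := toAdd_transvection e hz t x
    rw [hx, map_one, toAdd_one, eq_comm] at this
    exact (mul_eq_zero.mp this).resolve_right h
  rwa [transvection_apply, hex, mul_zero, zpow_zero, mul_one] at hx

theorem transvection_surjective_iff (he : Function.Surjective e) (hez : 2 < (e z).toAdd) :
    Function.Surjective (transvection e hz t) ↔ t = 0 := by
  refine ⟨fun hs => ?_, fun ht => ht ▸ transvection_zero e hz ▸ Function.surjective_id⟩
  obtain ⟨g, hg⟩ := he (.ofAdd 1)
  obtain ⟨x, hx⟩ := hs g
  have hunit : (1 + t * (e z).toAdd) * (e x).toAdd = 1 := by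
    rw [mul_comm, ← toAdd_transvection e hz, hx, hg, toAdd_ofAdd]
  rcases Int.eq_one_or_neg_one_of_mul_eq_one hunit with h | h
  · exact (mul_eq_zero.mp (by linarith : t * (e z).toAdd = 0)).resolve_right (by omega)
  · have : (e z).toAdd ∣ 2 := ⟨-t, by linarith⟩
    have := Int.le_of_dvd two_pos this
    omega

end Transvection

namespace BraidGroup

variable {n : ℕ}

theorem braidGen_braid {i j : Fin n} (h : (i : ℕ) + 1 = j) :
    braidGen i * braidGen j * braidGen i = braidGen j * braidGen i * braidGen j :=
  mul_inv_eq_one.mp <| (QuotientGroup.eq_one_iff _).mpr <|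
    Subgroup.subset_normalClosure (Or.inl ⟨i, j, h, rfl⟩)

theorem braidGen_commute {i j : Fin n} (h : (i : ℕ) + 2 ≤ j) :
    Commute (braidGen i) (braidGen j) :=
  mul_inv_eq_one.mp <| (QuotientGroup.eq_one_iff _).mpr <|
    Subgroup.subset_normalClosure (Or.inr ⟨i, j, h, rfl⟩)

/-- Generators indexed by `ℕ`; out of range they are `1`, so commutation holds for all indices. -/
def gen (n i : ℕ) : BraidGroup n := if h : i < n then braidGen ⟨i, h⟩ else 1

theorem gen_val (i : Fin n) : gen n i = braidGen i := dif_pos i.isLt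

theorem gen_braid {i : ℕ} (h : i + 1 < n) :
    gen n i * gen n (i + 1) * gen n i = gen n (i + 1) * gen n i * gen n (i + 1) := by
  simpa only [← gen_val] using braidGen_braid (i := ⟨i, by omega⟩) (j := ⟨i + 1, h⟩) rfl

theorem gen_commute {i j : ℕ} (h : i + 2 ≤ j) : Commute (gen n i) (gen n j) := by
  by_cases hj : j < n
  · simpa only [← gen_val] using braidGen_commute (i := ⟨i, by omega⟩) (j := ⟨j, hj⟩) h
  · simp [gen, hj]

def prefixProd (n : ℕ) : ℕ → BraidGroup n
  | 0 => 1
  | k + 1 => prefixProd n k * gen n k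

theorem prefixProd_commute_gen {k j : ℕ} (h : k + 1 ≤ j) : Commute (prefixProd n k) (gen n j) := by
  induction k with
  | zero => exact Commute.one_left _
  | succ k ih => exact (ih (by omega)).mul_left (gen_commute (by omega))

theorem ofFn_gen_prod {k : ℕ} : (List.ofFn fun i : Fin k => gen n i).prod = prefixProd n k := by
  induction k with
  | zero => rfl
  | succ k ih => 
    simp only [List.ofFn_succ', List.concat_eq_append, List.prod_append, Fin.val_castSucc, ih,
      Fin.val_last, List.prod_singleton, prefixProd]

theorem semiconjBy_prefixProd_gen {i k : ℕ} (hk : i + 2 ≤ k) (hn : i + 2 ≤ n) :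
    SemiconjBy (prefixProd n k) (gen n i) (gen n (i + 1)) := by
  unfold SemiconjBy
  induction k, hk using Nat.le_induction with
  | base =>
    have hcomm := prefixProd_commute_gen (n := n) (le_refl (i + 1))
    calc prefixProd n i * gen n i * gen n (i + 1) * gen n i
        = prefixProd n i * (gen n i * gen n (i + 1) * gen n i) := by group
      _ = prefixProd n i * gen n (i + 1) * gen n i * gen n (i + 1) := by
          rw [gen_braid (by omega)]; group
      _ = gen n (i + 1) * (prefixProd n i * gen n i * gen n (i + 1)) := by
          rw [hcomm.eq]; group
  | succ k hk ih =>
    calc prefixProd n k * gen n k * gen n i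
        = prefixProd n k * gen n i * gen n k := by
          rw [mul_assoc, (gen_commute hk).symm.eq, mul_assoc]
      _ = gen n (i + 1) * (prefixProd n k * gen n k) := by rw [ih]; group

theorem semiconjBy_sq_prefixProd_gen {m : ℕ} (hm : m < n) :
    SemiconjBy (prefixProd n (m + 1) ^ 2) (gen n m) (gen n 0) := by
  unfold SemiconjBy
  induction m with
  | zero => simp only [prefixProd]; group
  | succ m ih =>
    set P := prefixProd n m
    set a := gen n m
    set b := gen n (m + 1)
    have hbraid : a * b * a = b * a * b := gen_braid hm
    have hbP : b * P = P * b := (prefixProd_commute_gen (le_refl (m + 1))).symm.eq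
    have ih' : (P * a) ^ 2 * a = gen n 0 * (P * a) ^ 2 := ih (by omega)
    show (P * a * b) ^ 2 * b = gen n 0 * (P * a * b) ^ 2
    rw [sq] at ih' ⊢
    calc P * a * b * (P * a * b) * b
        = P * a * (b * P) * a * b * b := by simp only [mul_assoc]
      _ = P * a * P * (b * a * b) * b := by rw [hbP]; simp only [mul_assoc]
      _ = P * a * P * (a * b * a) * b := by rw [hbraid]
      _ = P * a * (P * a) * (b * a * b) := by simp only [mul_assoc]
      _ = P * a * (P * a) * (a * b * a) := by rw [hbraid]
      _ = P * a * (P * a) * a * (b * a) := by simp only [mul_assoc]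
      _ = gen n 0 * (P * a * (P * a)) * (b * a) := by rw [ih']
      _ = gen n 0 * (P * a * P * (a * b * a)) := by simp only [mul_assoc]
      _ = gen n 0 * (P * a * P * (b * a * b)) := by rw [hbraid]
      _ = gen n 0 * (P * a * (b * P) * a * b) := by rw [hbP]; simp only [mul_assoc]
      _ = gen n 0 * (P * a * b * (P * a * b)) := by simp only [mul_assoc]

theorem semiconjBy_pow_prefixProd_gen {i m : ℕ} (h : i + m < n) :
    SemiconjBy (prefixProd n n ^ m) (gen n i) (gen n (i + m)) := by
  induction m with
  | zero => simpa only [pow_zero, add_zero] using SemiconjBy.one_left (gen n i)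
  | succ m ih =>
    rw [pow_succ' (prefixProd n n), ← add_assoc]
    exact (semiconjBy_prefixProd_gen (i := i + m) (by omega) (by omega)).mul_left (ih (by omega))

theorem fullTwist_eq_pow_prefixProd : fullTwist n = prefixProd n n ^ (n + 1) := by
  simp only [fullTwist, ← ofFn_gen_prod, gen_val]

theorem commute_fullTwist_gen {i : ℕ} (hi : i < n) : Commute (fullTwist n) (gen n i) := by
  have hsplit : n + 1 = i + 2 + (n - 1 - i) := by omega
  rw [fullTwist_eq_pow_prefixProd, hsplit, pow_add, pow_add]
  have h₁ := semiconjBy_pow_prefixProd_gen (n := n) (i := i) (m := n - 1 - i) (by omega)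
  have h₂ := semiconjBy_sq_prefixProd_gen (n := n) (m := n - 1) (by omega)
  have h₃ := semiconjBy_pow_prefixProd_gen (n := n) (i := 0) (m := i) (by omega)
  rw [show i + (n - 1 - i) = n - 1 by omega] at h₁
  rw [Nat.sub_add_cancel (by omega)] at h₂
  rw [zero_add] at h₃
  exact (h₃.mul_left h₂).mul_left h₁

theorem fullTwist_mem_center : fullTwist n ∈ Subgroup.center (BraidGroup n) := by
  rw [← Subgroup.centralizer_univ, ← Subgroup.coe_top, ← PresentedGroup.closure_range_of,
    Subgroup.centralizer_closure, Subgroup.mem_centralizer_iff]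
  rintro _ ⟨i, rfl⟩
  rw [← braidGen, ← gen_val]
  exact (commute_fullTwist_gen i.isLt).symm.eq

def expSum (n : ℕ) : BraidGroup n →* Multiplicative ℤ :=
  PresentedGroup.toGroup (f := fun _ => .ofAdd 1) <| by
    rintro r (⟨i, j, -, rfl⟩ | ⟨i, j, -, rfl⟩) <;> simp

theorem expSum_braidGen (i : Fin n) : expSum n (braidGen i) = .ofAdd 1 :=
  PresentedGroup.toGroup.of _

theorem toAdd_expSum_fullTwist : (expSum n (fullTwist n)).toAdd = (n + 1) * n := by
  simp [fullTwist, map_list_prod, List.map_ofFn, Function.comp_def, expSum_braidGen]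

theorem expSum_surjective (hn : 0 < n) : Function.Surjective (expSum n) := fun k =>
  ⟨braidGen ⟨0, hn⟩ ^ k.toAdd, by
    rw [map_zpow, expSum_braidGen, ← ofAdd_zsmul, smul_eq_mul, mul_one, ofAdd_toAdd]⟩

end BraidGroup

open BraidGroup

/-- For `n ≥ 3` and `t : ℤ`, there is a unique endomorphism `ρ` of
`B_{n+1}` with `ρ(σ_i) = σ_i z^t` for all `i`; it is injective for every `t`, and it is
surjective if and only if `t = 0`. -/
theorem braid_transvection_endomorphism
    (n : ℕ) (hn : 3 ≤ n) (t : ℤ) :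
    (∃! ρ : BraidGroup n →* BraidGroup n,
        ∀ i : Fin n, ρ (braidGen i) = braidGen i * fullTwist n ^ t) ∧
    (∀ ρ : BraidGroup n →* BraidGroup n,
        (∀ i : Fin n, ρ (braidGen i) = braidGen i * fullTwist n ^ t) →
        Function.Injective ρ ∧ (Function.Surjective ρ ↔ t = 0)) := by
  set τ := transvection (expSum n) fullTwist_mem_center t
  have hτ (i : Fin n) : τ (braidGen i) = braidGen i * fullTwist n ^ t := by
    rw [transvection_apply, expSum_braidGen, toAdd_ofAdd, mul_one]
  have huniq (ρ : BraidGroup n →* BraidGroup n)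
      (hρ : ∀ i, ρ (braidGen i) = braidGen i * fullTwist n ^ t) : ρ = τ :=
    PresentedGroup.ext fun i => (hρ i).trans (hτ i).symm
  have hN : 2 < (expSum n (fullTwist n)).toAdd := by
    rw [toAdd_expSum_fullTwist]; nlinarith
  refine ⟨⟨τ, hτ, huniq⟩, fun ρ hρ => huniq ρ hρ ▸ ⟨?_, ?_⟩⟩
  · exact transvection_injective _ _ t (by omega)
  · exact transvection_surjective_iff _ _ t (expSum_surjective (by omega)) hN
end

section
/- Let n ≥ 3 and let u, v be integers. There is a unique group endomorphism ρ of the Artin group C(B_n) satisfying ρ(s_1) = s_1 z^u and ρ(s_i) = s_i z^v for all 2 ≤ i ≤ n, and this endomorphism is injective for every choice of u and v. -/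
/-- The defining relations of the Artin group of type `B_n`, on generators `s_1, …, s_n`
(indexed by `Fin n`, so `s_{i+1}` corresponds to the index `i`):
`s_1 s_2 s_1 s_2 = s_2 s_1 s_2 s_1`, the braid relation `s_i s_{i+1} s_i = s_{i+1} s_i s_{i+1}`
for `2 ≤ i ≤ n-1`, and the commutation `s_i s_j = s_j s_i` for `|i - j| ≥ 2`. -/
def typeBRels (n : ℕ) : Set (FreeGroup (Fin n)) :=
  {r | (∃ i j : Fin n, (i : ℕ) = 0 ∧ (j : ℕ) = 1 ∧
          r = (.of i * .of j) ^ 2 * ((.of j * .of i) ^ 2)⁻¹) ∨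
       (∃ i j : Fin n, 1 ≤ (i : ℕ) ∧ (i : ℕ) + 1 = (j : ℕ) ∧
          r = .of i * .of j * .of i * (.of j * .of i * .of j)⁻¹) ∨
       (∃ i j : Fin n, (i : ℕ) + 2 ≤ (j : ℕ) ∧
          r = .of i * .of j * (.of j * .of i)⁻¹)}

/-- The Artin group of type `B_n`. -/
abbrev ArtinB (n : ℕ) : Type := PresentedGroup (typeBRels n)

/-- The standard generator `s_{i+1}` of the Artin group of type `B_n`. -/
def artinBGen {n : ℕ} (i : Fin n) : ArtinB n := PresentedGroup.of i

/-- The element `z = (s_1 s_2 ⋯ s_n)^n`, which generates the center of the Artin group of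
type `B_n`. -/
def artinBTwist (n : ℕ) : ArtinB n :=
  ((List.ofFn fun i : Fin n => artinBGen i).prod) ^ n

/-!
Write `δ = s_1 s_2 ⋯ s_n`, so that `z = δ^n`. Conjugation by `δ` shifts `s_i` to `s_{i+1}` for
`2 ≤ i < n`, and `δ²` takes `s_n` back to `s_2`; hence `δ^n` commutes with `s_2, …, s_n`, and with
`s_1 = δ (s_2 ⋯ s_n)⁻¹`, so `z` is central. For the homomorphism `ψ : C(B_n) → ℤ` with `s_1 ↦ u`
and `s_i ↦ v`, the map `g ↦ g z^{ψ(g)}` is then the required endomorphism (unique since the `s_i`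
generate). It is injective because `ψ(z) = n ψ(δ) ≠ -1` for `n ≥ 2`.
-/

section Transvection

variable {G : Type*} [Group G]

def centralTransvection (z : G) (hz : z ∈ Subgroup.center G) (ψ : G →* Multiplicative ℤ) :
    G →* G where
  toFun g := g * z ^ (ψ g).toAdd
  map_one' := by simp
  map_mul' a b := by
    have hb : Commute b (z ^ (ψ a).toAdd) :=
      Commute.zpow_right (Subgroup.mem_center_iff.1 hz b) _
    simp only [map_mul, toAdd_mul, zpow_add]
    rw [mul_assoc a, ← mul_assoc b, hb.eq]
    group

theorem centralTransvection_apply (z : G) (hz : z ∈ Subgroup.center G)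
    (ψ : G →* Multiplicative ℤ) (g : G) :
    centralTransvection z hz ψ g = g * z ^ (ψ g).toAdd := rfl

/-- If `g z^{ψ g} = 1` then `g = z^{-c}` with `c = ψ g`, so `c = -c ψ(z)`, forcing `c = 0`. -/
theorem centralTransvection_injective (z : G) (hz : z ∈ Subgroup.center G)
    (ψ : G →* Multiplicative ℤ) (hψz : (ψ z).toAdd ≠ -1) :
    Function.Injective (centralTransvection z hz ψ) := by
  rw [injective_iff_map_eq_one]
  intro g hg
  rw [centralTransvection_apply] at hg
  have hgz : g = z ^ (-(ψ g).toAdd) := by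
    rw [zpow_neg]
    exact eq_inv_of_mul_eq_one_left hg
  have hc : (ψ g).toAdd * (1 + (ψ z).toAdd) = 0 := by
    have h := congrArg (fun x => (ψ x).toAdd) hgz
    simp only [map_zpow, toAdd_zpow, smul_eq_mul] at h
    linear_combination h
  have hc0 : (ψ g).toAdd = 0 :=
    (mul_eq_zero.1 hc).resolve_right fun h => hψz (by linarith)
  rw [hgz, hc0, neg_zero, zpow_zero]

theorem toAdd_map_pow_ne_neg_one (ψ : G →* Multiplicative ℤ) (x : G) {n : ℕ} (hn : 2 ≤ n) :
    (ψ (x ^ n)).toAdd ≠ -1 := by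
  rw [map_pow, toAdd_pow, nsmul_eq_mul]
  intro h
  have hdvd : (n : ℤ) ∣ 1 := ⟨-(ψ x).toAdd, by linarith⟩
  have := Int.le_of_dvd one_pos hdvd
  omega

end Transvection

namespace ArtinB

variable {n : ℕ}

/-- `s n k` is the generator `s_{k+1}`, with the junk value `1` for `n ≤ k`. -/
def s (n k : ℕ) : ArtinB n := if h : k < n then artinBGen ⟨k, h⟩ else 1

theorem s_of_lt {k : ℕ} (h : k < n) : s n k = artinBGen ⟨k, h⟩ := dif_pos h

theorem s_of_le {k : ℕ} (h : n ≤ k) : s n k = 1 := dif_neg (Nat.not_lt.2 h)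

theorem mk_of (i : Fin n) : PresentedGroup.mk (typeBRels n) (FreeGroup.of i) = artinBGen i := rfl

theorem s_zero_s_one_braid : s n 0 * s n 1 * s n 0 * s n 1 = s n 1 * s n 0 * s n 1 * s n 0 := by
  rcases Nat.lt_or_ge 1 n with h | h
  · have hrel := PresentedGroup.mk_eq_mk_of_mul_inv_mem (rels := typeBRels n)
      (x := (.of ⟨0, by omega⟩ * .of ⟨1, h⟩) ^ 2) (y := (.of ⟨1, h⟩ * .of ⟨0, by omega⟩) ^ 2)
      (Or.inl ⟨_, _, rfl, rfl, rfl⟩)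
    simp only [map_mul, mk_of, sq] at hrel
    simpa only [s_of_lt h, s_of_lt (by omega : 0 < n), mul_assoc] using hrel
  · simp [s_of_le h]

theorem s_braid {i : ℕ} (hi : 1 ≤ i) (hin : i + 1 < n) :
    s n i * s n (i + 1) * s n i = s n (i + 1) * s n i * s n (i + 1) := by
  have hrel := PresentedGroup.mk_eq_mk_of_mul_inv_mem (rels := typeBRels n)
    (x := .of ⟨i, by omega⟩ * .of ⟨i + 1, hin⟩ * .of ⟨i, by omega⟩)
    (y := .of ⟨i + 1, hin⟩ * .of ⟨i, by omega⟩ * .of ⟨i + 1, hin⟩)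
    (Or.inr (Or.inl ⟨_, _, hi, rfl, rfl⟩))
  simp only [map_mul, mk_of] at hrel
  rwa [s_of_lt hin, s_of_lt (by omega : i < n)]

theorem commute_s_s {i j : ℕ} (hij : i + 2 ≤ j) : Commute (s n i) (s n j) := by
  rcases Nat.lt_or_ge j n with hj | hj
  · have hrel := PresentedGroup.mk_eq_mk_of_mul_inv_mem (rels := typeBRels n)
      (x := .of ⟨i, by omega⟩ * .of ⟨j, hj⟩) (y := .of ⟨j, hj⟩ * .of ⟨i, by omega⟩)
      (Or.inr (Or.inr ⟨_, _, hij, rfl⟩))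
    simp only [map_mul, mk_of] at hrel
    rwa [Commute, SemiconjBy, s_of_lt hj, s_of_lt (by omega : i < n)]
  · rw [s_of_le hj]
    exact Commute.one_right _

/-- The product `s_{a+1} s_{a+2} ⋯ s_{a+b}`. -/
def block (n a b : ℕ) : ArtinB n := ((List.range' a b).map (s n)).prod

theorem block_succ (a b : ℕ) : block n a (b + 1) = block n a b * s n (a + b) := by
  simp [block, List.range'_1_concat]

theorem block_succ' (a b : ℕ) : block n a (b + 1) = s n a * block n (a + 1) b := by
  simp [block, List.range'_succ]

theorem block_add (a b c : ℕ) : block n a (b + c) = block n a b * block n (a + b) c := by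
  rw [block, block, block, ← List.range'_append_1, List.map_append, List.prod_append]

theorem commute_s_block {i a b : ℕ} (h : i + 2 ≤ a ∨ a + b + 1 ≤ i) :
    Commute (s n i) (block n a b) := by
  refine Commute.list_prod_right _ _ fun x hx => ?_
  obtain ⟨k, hk, rfl⟩ := List.mem_map.1 hx
  rw [List.mem_range'_1] at hk
  rcases h with h | h
  · exact commute_s_s (by omega)
  · exact (commute_s_s (by omega)).symm


theorem semiconjBy_block_s {a b i : ℕ} (hai : a ≤ i) (hi : 1 ≤ i) (hib : i + 2 ≤ a + b)
    (hbn : a + b ≤ n) : SemiconjBy (block n a b) (s n i) (s n (i + 1)) := by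
  obtain ⟨m, rfl⟩ : ∃ m, b = (i - a) + 2 + m := ⟨b - (i - a) - 2, by omega⟩
  have hsplit : block n a ((i - a) + 2 + m) =
      block n a (i - a) * s n i * s n (i + 1) * block n (i + 2) m := by
    rw [block_add, block_succ, block_succ, show a + (i - a) = i by omega,
      show a + (i - a + 1) = i + 1 by omega, show a + (i - a + 2) = i + 2 by omega]
  have hleft : Commute (s n (i + 1)) (block n a (i - a)) := commute_s_block (Or.inr (by omega))
  have hright : Commute (s n i) (block n (i + 2) m) := commute_s_block (Or.inl le_rfl)
  rw [SemiconjBy, hsplit]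
  calc block n a (i - a) * s n i * s n (i + 1) * block n (i + 2) m * s n i
      = block n a (i - a) * (s n i * s n (i + 1) * s n i) * block n (i + 2) m := by
        simp only [mul_assoc, hright.eq]
    _ = block n a (i - a) * (s n (i + 1) * s n i * s n (i + 1)) * block n (i + 2) m := by
        rw [s_braid hi (by omega)]
    _ = s n (i + 1) * (block n a (i - a) * s n i * s n (i + 1) * block n (i + 2) m) := by
        simp only [← mul_assoc, hleft.eq]

theorem semiconjBy_block_block {a b c d : ℕ} (hac : a ≤ c) (hc : 1 ≤ c)
    (hdb : c + d + 1 ≤ a + b) (hbn : a + b ≤ n) :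
    SemiconjBy (block n a b) (block n c d) (block n (c + 1) d) := by
  induction d with
  | zero => exact SemiconjBy.one_right _
  | succ d ih =>
    rw [block_succ, block_succ, show c + 1 + d = c + d + 1 by omega]
    exact (ih (by omega)).mul_right (semiconjBy_block_s (by omega) (by omega) (by omega) hbn)

def delta (n : ℕ) : ArtinB n := block n 0 n

theorem semiconjBy_delta_pow_s {i : ℕ} (k : ℕ) (hi : 1 ≤ i) (hik : i + k < n) :
    SemiconjBy (delta n ^ k) (s n i) (s n (i + k)) := by
  induction k generalizing i with
  | zero => simp
  | succ k ih =>
    rw [pow_succ, show i + (k + 1) = i + 1 + k by omega]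
    exact (ih (by omega) (by omega)).mul_left
      (semiconjBy_block_s (Nat.zero_le _) hi (by omega) (by omega))

/-- Conjugation by `δ` takes `s_n` to `γ⁻¹ s_1 s_2 s_1⁻¹ γ` with `γ = s_3 ⋯ s_n`, and that back
to `s_2`, the last step by the relation `s_1 s_2 s_1 s_2 = s_2 s_1 s_2 s_1`. -/
theorem semiconjBy_delta_sq_s_last (hn : 2 ≤ n) :
    SemiconjBy (delta n ^ 2) (s n (n - 1)) (s n 1) := by
  obtain ⟨m, rfl⟩ : ∃ m, n = m + 2 := ⟨n - 2, by omega⟩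
  rw [SemiconjBy, show m + 2 - 1 = m + 1 by omega]
  have hδ : delta (m + 2) = s _ 0 * block _ 1 (m + 1) := block_succ' 0 (m + 1)
  have hP : block (m + 2) 1 (m + 1) = s _ 1 * block _ 2 m := block_succ' 1 m
  have hPlast : block (m + 2) 1 (m + 1) = block _ 1 m * s _ (m + 1) := by
    rw [block_succ, Nat.add_comm 1 m]
  have hshift : block (m + 2) 1 (m + 1) * block _ 1 m = block _ 2 m * block _ 1 (m + 1) :=
    semiconjBy_block_block le_rfl le_rfl (by omega) (by omega)
  have hγ : Commute (s (m + 2) 0) (block _ 2 m) := commute_s_block (Or.inl le_rfl)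
  have hab := s_zero_s_one_braid (n := m + 2)
  rw [hδ, sq]
  generalize s (m + 2) 0 = a, s (m + 2) 1 = b, s (m + 2) (m + 1) = t, block (m + 2) 2 m = γ,
    block (m + 2) 1 m = Q, block (m + 2) 1 (m + 1) = P at *
  have hPt : P * t = γ⁻¹ * b * γ * P := by
    calc P * t = γ⁻¹ * (γ * P) * Q⁻¹ * P := by nth_rw 3 [hPlast]; group
      _ = γ⁻¹ * b * γ * P := by rw [← hshift, hP]; group
  calc a * P * (a * P) * t
      = a * P * a * (P * t) := by group
    _ = a * b * (γ * a * γ⁻¹) * b * γ * P := by rw [hPt, hP]; group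
    _ = a * b * a * b * γ * P := by rw [hγ.symm.eq]; group
    _ = b * a * b * (a * γ) * P := by rw [hab]; group
    _ = b * (a * P * (a * P)) := by rw [hγ.eq, hP]; group

/-- `δ^{n-1-i}` moves `s_{i+1}` to `s_n`, `δ²` moves that to `s_2`, and `δ^{i-1}` moves
that to `s_{i+1}`. -/
theorem commute_delta_pow_s_of_pos (hn : 2 ≤ n) {i : ℕ} (hi : 1 ≤ i) (hin : i < n) :
    Commute (delta n ^ n) (s n i) := by
  have hup : SemiconjBy (delta n ^ (n - 1 - i)) (s n i) (s n (n - 1)) := by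
    simpa only [show i + (n - 1 - i) = n - 1 by omega] using
      semiconjBy_delta_pow_s (n - 1 - i) hi (by omega)
  have hback : SemiconjBy (delta n ^ (i - 1)) (s n 1) (s n i) := by
    simpa only [show 1 + (i - 1) = i by omega] using
      semiconjBy_delta_pow_s (i - 1) le_rfl (by omega)
  have h := (hback.mul_left (semiconjBy_delta_sq_s_last hn)).mul_left hup
  rwa [← pow_add, ← pow_add, show i - 1 + 2 + (n - 1 - i) = n by omega] at h

theorem commute_delta_pow_s (hn : 2 ≤ n) (i : ℕ) : Commute (delta n ^ n) (s n i) := by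
  rcases Nat.eq_zero_or_pos i with rfl | hi
  · have hs₀ : s n 0 = delta n * (block n 1 (n - 1))⁻¹ := by
      rw [delta, show n = n - 1 + 1 by omega, block_succ', Nat.add_sub_cancel,
        mul_inv_cancel_right]
    have hrest : Commute (delta n ^ n) (block n 1 (n - 1)) := by
      refine Commute.list_prod_right _ _ fun x hx => ?_
      obtain ⟨k, hk, rfl⟩ := List.mem_map.1 hx
      rw [List.mem_range'_1] at hk
      exact commute_delta_pow_s_of_pos hn (by omega) (by omega)
    rw [hs₀]
    exact (Commute.pow_self _ _).mul_right hrest.inv_right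
  rcases Nat.lt_or_ge i n with hin | hin
  · exact commute_delta_pow_s_of_pos hn hi hin
  · rw [s_of_le hin]
    exact Commute.one_right _

theorem twist_eq_delta_pow : artinBTwist n = delta n ^ n := by
  rw [artinBTwist, delta, block, ← List.range_eq_range', ← List.map_coe_finRange_eq_range,
    List.map_map, List.ofFn_eq_map]
  congr 2
  exact List.map_congr_left fun i _ => (s_of_lt i.isLt).symm

theorem twist_mem_center (hn : 2 ≤ n) : artinBTwist n ∈ Subgroup.center (ArtinB n) := by
  rw [Subgroup.mem_center_iff]
  intro g
  refine (Subgroup.mem_centralizer_iff.1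
    (PresentedGroup.generated_by _ (Subgroup.centralizer {artinBTwist n}) (fun j => ?_) g) _
    (Set.mem_singleton _)).symm
  rw [Subgroup.mem_centralizer_singleton_iff, twist_eq_delta_pow]
  have h := commute_delta_pow_s hn j
  rw [s_of_lt j.isLt] at h
  exact h.eq.symm

theorem lift_eq_one_of_mem_typeBRels {A : Type*} [CommGroup A] (f : Fin n → A)
    (hf : ∀ i j : Fin n, 1 ≤ (i : ℕ) → 1 ≤ (j : ℕ) → f i = f j) :
    ∀ r ∈ typeBRels n, FreeGroup.lift f r = 1 := by
  rintro r (⟨i, j, -, -, rfl⟩ | ⟨i, j, hi, hij, rfl⟩ | ⟨i, j, -, rfl⟩)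
  · simp [mul_comm (f i)]
  · simp [hf i j hi (by omega)]
  · simp [mul_comm (f i)]

def degree (n : ℕ) (u v : ℤ) : ArtinB n →* Multiplicative ℤ :=
  PresentedGroup.toGroup (f := fun i : Fin n => .ofAdd (if (i : ℕ) = 0 then u else v))
    (lift_eq_one_of_mem_typeBRels _ fun i j hi hj => by
      rw [if_neg (by omega), if_neg (by omega)])

theorem degree_gen (u v : ℤ) (i : Fin n) :
    (degree n u v (artinBGen i)).toAdd = if (i : ℕ) = 0 then u else v :=
  congrArg Multiplicative.toAdd (PresentedGroup.toGroup.of _)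

end ArtinB

/-- For `n ≥ 3` and integers `u, v`, there is a unique endomorphism `ρ`
of the Artin group of type `B_n` with `ρ(s_1) = s_1 z^u` and `ρ(s_i) = s_i z^v` for
`2 ≤ i ≤ n`, and it is injective for every choice of `u` and `v`. -/
theorem artinB_transvection_endomorphism
    (n : ℕ) (hn : 3 ≤ n) (u v : ℤ) :
    (∃! ρ : ArtinB n →* ArtinB n,
        ∀ i : Fin n,
          ρ (artinBGen i) = artinBGen i * artinBTwist n ^ (if (i : ℕ) = 0 then u else v)) ∧
    (∀ ρ : ArtinB n →* ArtinB n,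
        (∀ i : Fin n,
          ρ (artinBGen i) = artinBGen i * artinBTwist n ^ (if (i : ℕ) = 0 then u else v)) →
        Function.Injective ρ) := by
  let ρ₀ := centralTransvection (artinBTwist n) (ArtinB.twist_mem_center (by omega))
    (ArtinB.degree n u v)
  have hρ₀ : ∀ i : Fin n,
      ρ₀ (artinBGen i) = artinBGen i * artinBTwist n ^ (if (i : ℕ) = 0 then u else v) :=
    fun i => by rw [centralTransvection_apply, ArtinB.degree_gen]
  have huniq : ∀ ρ : ArtinB n →* ArtinB n, (∀ i : Fin n,
      ρ (artinBGen i) = artinBGen i * artinBTwist n ^ (if (i : ℕ) = 0 then u else v)) → ρ = ρ₀ :=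
    fun ρ hρ => PresentedGroup.ext fun i => (hρ i).trans (hρ₀ i).symm
  refine ⟨⟨ρ₀, hρ₀, huniq⟩, fun ρ hρ => ?_⟩
  rw [huniq ρ hρ]
  exact centralTransvection_injective _ _ _ (toAdd_map_pow_ne_neg_one _ _ (by omega))
end
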